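/- Let G be a k-connected, k-regular simple graph. If G admits ⌊k/2⌋ completely independent spanning trees, then ⌈(|V(G)| − 2)/⌈k/2⌉⌉ ≤ ⌊|V(G)|/⌊k/2⌋⌋. -/

import Mathlib

open SimpleGraph

/-- `T` is a spanning tree of `G`: a subgraph of `G` (on the same vertex set) that is a tree. -/
def IsSpanningTreeOf {V : Type*} (G T : SimpleGraph V) : Prop :=
  T ≤ G ∧ T.IsTree

/-- A family of spanning trees of `G` are *completely independent* if for every pair of
distinct vertices `x ≠ y` and distinct indices `i ≠ j`, the (unique) paths from `x` to `y`
in `T i` and `T j` share no edges, and share no vertices except `x` and `y`. -/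
def AreCISTs {V : Type*} {k : ℕ} (G : SimpleGraph V) (T : Fin k → SimpleGraph V) : Prop :=
  (∀ i, IsSpanningTreeOf G (T i)) ∧
  ∀ x y : V, x ≠ y → ∀ i j : Fin k, i ≠ j →
    ∀ p : (T i).Walk x y, ∀ q : (T j).Walk x y, p.IsPath → q.IsPath →
      (∀ e ∈ p.edges, e ∉ q.edges) ∧
      (∀ v ∈ p.support, v ∈ q.support → v = x ∨ v = y)

/-- The `n`-dimensional hypercube: vertices are functions `Fin n → ZMod 2`, adjacent iff
they differ in exactly one coordinate. -/
def hypercube (n : ℕ) : SimpleGraph (Fin n → ZMod 2) where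
  Adj x y := hammingDist x y = 1
  symm := ⟨fun x y h => by rwa [hammingDist_comm]⟩
  loopless := ⟨fun x h => by simp [hammingDist_self] at h⟩

/-- `G` is `k`-connected: it has more than `k` vertices and remains connected after
removing any set of fewer than `k` vertices. -/
def KConnected {V : Type*} (G : SimpleGraph V) (k : ℕ) : Prop :=
  k < Nat.card V ∧
  ∀ s : Finset V, s.card < k → ((G.induce ((↑s : Set V)ᶜ))).Connected

/-- `G` is `k`-regular: every vertex has exactly `k` neighbours. -/
def IsKRegular {V : Type*} (G : SimpleGraph V) (k : ℕ) : Prop :=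
  ∀ v : V, (G.neighborSet v).ncard = k


/-!
Edge-disjointness of the trees bounds every tree degree by `⌈k/2⌉ + 1`: at each vertex, each of
the other `⌊k/2⌋ - 1` trees uses at least one of the `k` edges. Complete independence makes the
sets of inner (non-leaf) vertices of the trees pairwise disjoint: deleting a vertex that is inner
in both `T i` and `T j` disconnects both trees, yet any two remaining vertices stay connected in
one of them. Hence some tree has at most `|V| / ⌊k/2⌋` inner vertices, while the degree sum
`2(|V| - 1)` of a tree of maximum degree `⌈k/2⌉ + 1` forces at least `(|V| - 2) / ⌈k/2⌉` of them.
For `k = 1` the claim is that a connected `1`-regular graph has two vertices.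
-/

open Finset Function

namespace SimpleGraph

variable {V : Type*}

lemma Walk.reachable_deleteIncidenceSet {G : SimpleGraph V} {v x y : V} (p : G.Walk x y)
    (hv : v ∉ p.support) : (G.deleteIncidenceSet v).Reachable x y :=
  ⟨p.toDeleteEdges _ fun _ he hinc => hv (p.mem_support_of_mem_edges he hinc.2)⟩

/-- The edge `s(v, a)` is a bridge, and `b` would reach `v` without it. -/
lemma IsAcyclic.not_reachable_deleteIncidenceSet {T : SimpleGraph V} (hT : T.IsAcyclic)
    {v a b : V} (ha : T.Adj v a) (hb : T.Adj v b) (hab : a ≠ b) :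
    ¬ (T.deleteIncidenceSet v).Reachable a b := by
  intro hreach
  have hle : T.deleteIncidenceSet v ≤ T.deleteEdges {s(v, a)} := fun x y hxy => by
    rw [deleteIncidenceSet_adj] at hxy
    simp only [deleteEdges_adj, hxy.1, Set.mem_singleton_iff, Sym2.eq_iff, true_and]
    tauto
  have hbv : (T.deleteEdges {s(v, a)}).Adj b v := by
    simp [hb.symm, hab.symm, ha.ne]
  exact isAcyclic_iff_forall_adj_isBridge.mp hT ha ((hreach.mono hle).trans hbv.reachable).symm

lemma one_lt_degree_iff [Fintype V] {G : SimpleGraph V} [DecidableRel G.Adj] {v : V} :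
    1 < G.degree v ↔ (G.neighborSet v).Nontrivial := by
  rw [← card_neighborFinset_eq_degree, Finset.one_lt_card_iff_nontrivial, Finset.Nontrivial,
    coe_neighborFinset]

variable [Fintype V]

lemma sum_degree_le_of_pairwise_disjoint {ι : Type*} [Fintype ι] {G : SimpleGraph V}
    [DecidableRel G.Adj] {H : ι → SimpleGraph V} [∀ i, DecidableRel (H i).Adj]
    (hle : ∀ i, H i ≤ G) (hdisj : Pairwise (Disjoint on H)) (v : V) :
    ∑ i, (H i).degree v ≤ G.degree v := by
  classical
  simp_rw [← card_neighborFinset_eq_degree]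
  rw [← Finset.card_biUnion fun i _ j _ hij => Finset.disjoint_left.2 fun u hi hj =>
    disjoint_left.1 (hdisj hij) v u ((mem_neighborFinset _ _ _).1 hi)
      ((mem_neighborFinset _ _ _).1 hj)]
  refine Finset.card_le_card (Finset.biUnion_subset.2 fun i _ u hu => ?_)
  rw [mem_neighborFinset] at hu ⊢
  exact hle i hu

lemma degree_add_card_sub_one_le_of_pairwise_disjoint {ι : Type*} [Fintype ι]
    {G : SimpleGraph V} [DecidableRel G.Adj] {H : ι → SimpleGraph V} [∀ i, DecidableRel (H i).Adj]
    (hle : ∀ i, H i ≤ G) (hdisj : Pairwise (Disjoint on H)) {v : V}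
    (hpos : ∀ j, 0 < (H j).degree v) (i : ι) :
    (H i).degree v + (Fintype.card ι - 1) ≤ G.degree v := by
  classical
  have hsum := sum_degree_le_of_pairwise_disjoint hle hdisj v
  rw [← Finset.add_sum_erase _ _ (Finset.mem_univ i)] at hsum
  have hrest := Finset.card_nsmul_le_sum (Finset.univ.erase i) (fun j => (H j).degree v) 1
    fun j _ => hpos j
  rw [Finset.card_erase_of_mem (Finset.mem_univ i), Finset.card_univ, smul_eq_mul,
    mul_one] at hrest
  omega

lemma Connected.card_le_two_of_isRegularOfDegree_one {G : SimpleGraph V} [DecidableRel G.Adj]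
    (hG : G.Connected) (hreg : G.IsRegularOfDegree 1) : Fintype.card V ≤ 2 := by
  have hedges := hG.card_vert_le_card_edgeSet_add_one
  have hsum := G.sum_degrees_eq_twice_card_edges
  simp only [hreg.degree_eq, Finset.sum_const, Finset.card_univ, smul_eq_mul, mul_one] at hsum
  rw [Nat.card_eq_fintype_card, Nat.card_eq_fintype_card, ← edgeFinset_card] at hedges
  omega

def innerVertices (T : SimpleGraph V) [DecidableRel T.Adj] : Finset V :=
  {v | 1 < T.degree v}

lemma IsTree.card_sub_two_le_card_innerVertices_mul {T : SimpleGraph V} [DecidableRel T.Adj]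
    (hT : T.IsTree) {d : ℕ} (hd : ∀ v, T.degree v ≤ d + 1) :
    Fintype.card V - 2 ≤ #T.innerVertices * d := by
  have hsum : ∑ v, T.degree v = 2 * (Fintype.card V - 1) := by
    have := hT.card_edgeFinset
    rw [sum_degrees_eq_twice_card_edges]
    omega
  rw [← Finset.sum_filter_add_sum_filter_not _ (1 < T.degree ·)] at hsum
  have hinner : ∑ v ∈ T.innerVertices, T.degree v ≤ #T.innerVertices * (d + 1) := by
    simpa using Finset.sum_le_card_nsmul _ _ _ fun v _ => hd v
  have hleaves : ∑ v ∈ {v | ¬ 1 < T.degree v}, T.degree v ≤ #{v | ¬ 1 < T.degree v} := by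
    simpa using Finset.sum_le_card_nsmul {v | ¬ 1 < T.degree v} (T.degree ·) 1
      fun v hv => by simp only [Finset.mem_filter] at hv; omega
  have hcard := Finset.card_filter_add_card_filter_not (s := Finset.univ) (1 < T.degree ·)
  rw [Finset.card_univ] at hcard
  rw [mul_add_one] at hinner
  change ∑ v ∈ T.innerVertices, T.degree v + _ = _ at hsum
  change #T.innerVertices + _ = _ at hcard
  omega

end SimpleGraph

lemma Equivalence.forall_or_forall_of_forall_or {α : Type*} {r s : α → α → Prop}
    (hr : Equivalence r) (hs : Equivalence s) {P : α → Prop}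
    (h : ∀ x y, P x → P y → r x y ∨ s x y) :
    (∀ x y, P x → P y → r x y) ∨ (∀ x y, P x → P y → s x y) := by
  by_contra! ⟨⟨a, b, ha, hb, hab⟩, ⟨c, d, hc, hd, hcd⟩⟩
  have hsab := (h a b ha hb).resolve_left hab
  obtain ⟨y, hy, hsay⟩ : ∃ y, P y ∧ ¬ s a y := by
    by_cases hac : s a c
    · exact ⟨d, hd, fun had => hcd (hs.trans (hs.symm hac) had)⟩
    · exact ⟨c, hc, hac⟩
  have hray := (h a y ha hy).resolve_right hsay
  have hrby := (h b y hb hy).resolve_right fun hsby => hsay (hs.trans hsab hsby)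
  exact hab (hr.trans hray (hr.symm hrby))

lemma ceil_div_le_floor_div_of_le_mul {K : Type*} [Field K] [LinearOrder K]
    [IsStrictOrderedRing K] [FloorRing K] {x y p q : K} (hp : 0 < p) (hq : 0 < q) (N : ℤ)
    (hx : x ≤ N * p) (hy : q * N ≤ y) : ⌈x / p⌉ ≤ ⌊y / q⌋ :=
  (Int.ceil_le.2 ((div_le_iff₀ hp).2 hx)).trans
    (Int.le_floor.2 ((le_div_iff₀ hq).2 (by rwa [mul_comm])))

lemma Rat.floor_natCast_div_two (k : ℕ) : ⌊(k : ℚ) / 2⌋ = ((k / 2 : ℕ) : ℤ) := by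
  exact_mod_cast Rat.floor_natCast_div_natCast k 2

lemma Rat.ceil_natCast_div_two (k : ℕ) : ⌈(k : ℚ) / 2⌉ = ((k - k / 2 : ℕ) : ℤ) := by
  obtain ⟨j, rfl | rfl⟩ := Nat.even_or_odd' k
  · rw [show 2 * j - 2 * j / 2 = j by omega, Int.ceil_eq_iff]
    push_cast
    constructor <;> linarith
  · rw [show 2 * j + 1 - (2 * j + 1) / 2 = j + 1 by omega, Int.ceil_eq_iff]
    push_cast
    constructor <;> linarith

lemma Finset.exists_card_mul_card_le_of_pairwise_disjoint {α ι : Type*} [Fintype α] [Fintype ι]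
    [Nonempty ι] (s : ι → Finset α) (hs : Pairwise (Disjoint on s)) :
    ∃ i, Fintype.card ι * #(s i) ≤ Fintype.card α := by
  classical
  have hsum : ∑ i, #(s i) ≤ Fintype.card α := by
    rw [← Finset.card_biUnion fun i _ j _ hij => hs hij]
    exact Finset.card_le_univ _
  obtain ⟨i, -, hi⟩ := Finset.exists_le_of_sum_le Finset.univ_nonempty
    (f := fun i => Fintype.card ι * #(s i)) (g := fun _ => Fintype.card α) (by
      rw [← Finset.mul_sum, Finset.sum_const, Finset.card_univ, smul_eq_mul]
      exact Nat.mul_le_mul_left _ hsum)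
  exact ⟨i, hi⟩

namespace AreCISTs

variable {V : Type*} {k : ℕ} {G : SimpleGraph V} {T : Fin k → SimpleGraph V}

lemma isTree (hT : AreCISTs G T) (i : Fin k) : (T i).IsTree := (hT.1 i).2

lemma le (hT : AreCISTs G T) (i : Fin k) : T i ≤ G := (hT.1 i).1

lemma pairwise_disjoint (hT : AreCISTs G T) : Pairwise (Disjoint on T) := by
  intro i j hij
  refine disjoint_left.2 fun a b hi hj => ?_
  exact (hT.2 a b hi.ne i j hij _ _ (Path.singleton hi).2 (Path.singleton hj).2).1 s(a, b)
    (by simp [Path.singleton]) (by simp [Path.singleton])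

/-- The tree paths between `x` and `y` cannot both pass through `v`. -/
lemma reachable_or_reachable (hT : AreCISTs G T) {i j : Fin k} (hij : i ≠ j) {v x y : V}
    (hx : x ≠ v) (hy : y ≠ v) :
    ((T i).deleteIncidenceSet v).Reachable x y ∨ ((T j).deleteIncidenceSet v).Reachable x y := by
  rcases eq_or_ne x y with rfl | hxy
  · exact .inl .rfl
  obtain ⟨p, hp⟩ := (hT.isTree i).connected.exists_isPath x y
  obtain ⟨q, hq⟩ := (hT.isTree j).connected.exists_isPath x y
  by_contra! ⟨hi, hj⟩
  have hvp : v ∈ p.support := by_contra fun h => hi (p.reachable_deleteIncidenceSet h)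
  have hvq : v ∈ q.support := by_contra fun h => hj (q.reachable_deleteIncidenceSet h)
  rcases (hT.2 x y hxy i j hij p q hp hq).2 v hvp hvq with rfl | rfl <;> contradiction

/-- Removing `v` splits `T i` and `T j` into at least two pieces if `v` has two neighbours
in each; two such partitions of the other vertices cannot together connect every pair. -/
lemma subsingleton_neighborSet_or (hT : AreCISTs G T) {i j : Fin k} (hij : i ≠ j) (v : V) :
    ((T i).neighborSet v).Subsingleton ∨ ((T j).neighborSet v).Subsingleton := by
  by_contra! ⟨⟨a, ha, b, hb, hab⟩, ⟨c, hc, d, hd, hcd⟩⟩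
  rcases Equivalence.forall_or_forall_of_forall_or (reachable_is_equivalence _)
    (reachable_is_equivalence _) (P := (· ≠ v))
    fun x y hx hy => hT.reachable_or_reachable hij hx hy with h | h
  · exact (hT.isTree i).isAcyclic.not_reachable_deleteIncidenceSet ha hb hab
      (h a b ha.ne' hb.ne')
  · exact (hT.isTree j).isAcyclic.not_reachable_deleteIncidenceSet hc hd hcd
      (h c d hc.ne' hd.ne')

lemma pairwise_disjoint_innerVertices [Fintype V] [∀ i, DecidableRel (T i).Adj]
    (hT : AreCISTs G T) : Pairwise (Disjoint on fun i => (T i).innerVertices) := by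
  intro i j hij
  refine Finset.disjoint_left.2 fun v hvi hvj => ?_
  simp only [innerVertices, Finset.mem_filter, Finset.mem_univ, true_and,
    one_lt_degree_iff] at hvi hvj
  rcases hT.subsingleton_neighborSet_or hij v with h | h
  · exact hvi.not_subsingleton h
  · exact hvj.not_subsingleton h

end AreCISTs

lemma KConnected.connected {V : Type*} {G : SimpleGraph V} {k : ℕ} (h : KConnected G k)
    (hk : 0 < k) : G.Connected := by
  have hconn := h.2 ∅ (by simpa)
  rw [Finset.coe_empty, Set.compl_empty] at hconn
  exact G.induceUnivIso.connected_iff.mp hconn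

lemma IsKRegular.isRegularOfDegree {V : Type*} [Fintype V] {G : SimpleGraph V}
    [DecidableRel G.Adj] {k : ℕ} (h : IsKRegular G k) : G.IsRegularOfDegree k := fun v => by
  rw [← h v, ← card_neighborFinset_eq_degree, neighborFinset_def, Set.ncard_eq_toFinset_card']

/-- (Pai et al.) Necessary condition for a `k`-connected, `k`-regular graph to admit
`⌊k/2⌋` completely independent spanning trees:
`⌈(|V| - 2) / ⌈k/2⌉⌉ ≤ ⌊|V| / ⌊k/2⌋⌋`. -/
theorem cist_necessary_condition_regular {V : Type*} [Fintype V]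
    (G : SimpleGraph V) (k : ℕ)
    (hconn : KConnected G k) (hreg : IsKRegular G k)
    (hcist : ∃ T : Fin (k / 2) → SimpleGraph V, AreCISTs G T) :
    ⌈((Fintype.card V : ℚ) - 2) / ((⌈(k : ℚ) / 2⌉ : ℤ) : ℚ)⌉ ≤
      ⌊((Fintype.card V : ℚ)) / ((⌊(k : ℚ) / 2⌋ : ℤ) : ℚ)⌋ := by
  classical
  obtain ⟨T, hT⟩ := hcist
  have hGreg := hreg.isRegularOfDegree
  have hkn : k < Fintype.card V := Nat.card_eq_fintype_card (α := V) ▸ hconn.1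
  rw [Rat.floor_natCast_div_two, Rat.ceil_natCast_div_two]
  obtain hk | hk : k ≤ 1 ∨ 2 ≤ k := by omega
  · interval_cases k
    · simp
    · simpa using (hconn.connected one_pos).card_le_two_of_isRegularOfDegree_one hGreg
  · have : Nontrivial V := Fintype.one_lt_card_iff_nontrivial.1 (by omega)
    have : Nonempty (Fin (k / 2)) := ⟨⟨0, by omega⟩⟩
    obtain ⟨i, hi⟩ := Finset.exists_card_mul_card_le_of_pairwise_disjoint _
      hT.pairwise_disjoint_innerVertices
    have hdeg : ∀ v, (T i).degree v ≤ (k - k / 2) + 1 := fun v => by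
      have := degree_add_card_sub_one_le_of_pairwise_disjoint hT.le hT.pairwise_disjoint
        (fun j => (hT.isTree j).connected.preconnected.degree_pos_of_nontrivial v) i
      rw [hGreg.degree_eq, Fintype.card_fin] at this
      omega
    have hcount := (hT.isTree i).card_sub_two_le_card_innerVertices_mul hdeg
    rw [Fintype.card_fin] at hi
    refine ceil_div_le_floor_div_of_le_mul (by exact_mod_cast (by omega : 0 < k - k / 2))
      (by exact_mod_cast (by omega : 0 < k / 2)) #(T i).innerVertices ?_ (by exact_mod_cast hi)
    rw [sub_le_iff_le_add]
    exact_mod_cast Nat.sub_le_iff_le_add.1 hcount
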